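/- Let p be a prime and H_p the Heisenberg group of order p^3 over ZMod p. If ρ₁ and ρ₂ are complex irreducible representations of H_p of dimension greater than 1 whose central characters agree (i.e., ρ₁(z) and ρ₂(z) are the same scalar for every central z), then ρ₁ and ρ₂ are isomorphic. -/

import Mathlib

/-! By Schur's lemma a simple representation of `H_p` sends every central element to a scalar.
Commutators in `H_p` are powers of the central generator `z = [[1,0,1],[0,1,0],[0,0,1]]`, so if `z`
acted trivially all `ρ g` would commute and `ρ` would be one-dimensional; hence `z` acts by a
scalar `ω ≠ 1`. Every non-central `g` is conjugate to `g z`, so `χ(g) = ω χ(g)` and the character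
vanishes off the centre `Z`. For two such representations with the same central character this
gives `∑ χ₁(g) χ₂(g⁻¹) = |Z| d₁ d₂ ≠ 0`, and orthogonality of characters makes them isomorphic. -/

open Matrix

/-- The matrix [[1,a,c],[0,1,b],[0,0,1]]. -/
def heisMat (p : ℕ) (a b c : ZMod p) : Matrix (Fin 3) (Fin 3) (ZMod p) :=
  !![1, a, c; 0, 1, b; 0, 0, 1]

/-- The Heisenberg group mod `p`, as a subgroup of `GL₃(ZMod p)`. -/
def Heis (p : ℕ) : Subgroup (GL (Fin 3) (ZMod p)) where
  carrier := {g | ∃ a b c : ZMod p,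
    (g : Matrix (Fin 3) (Fin 3) (ZMod p)) = heisMat p a b c}
  one_mem' := ⟨0, 0, 0, by simp [heisMat, Matrix.one_fin_three]⟩
  mul_mem' := by
    rintro x y ⟨a, b, c, hx⟩ ⟨a', b', c', hy⟩
    refine ⟨a + a', b + b', c + c' + a * b', ?_⟩
    rw [Units.val_mul, hx, hy]
    ext i j
    fin_cases i <;> fin_cases j <;>
      simp [heisMat, Matrix.mul_apply, Fin.sum_univ_three, Matrix.vecHead, Matrix.vecTail] <;> ring
  inv_mem' := by
    rintro x ⟨a, b, c, hx⟩
    refine ⟨-a, -b, a * b - c, ?_⟩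
    have h1 : (x : Matrix (Fin 3) (Fin 3) (ZMod p)) * heisMat p (-a) (-b) (a * b - c) = 1 := by
      rw [hx]
      ext i j
      fin_cases i <;> fin_cases j <;>
        simp [heisMat, Matrix.mul_apply, Fin.sum_univ_three, Matrix.one_apply, Matrix.vecHead, Matrix.vecTail] <;> ring
    calc ((x⁻¹ : GL (Fin 3) (ZMod p)) : Matrix (Fin 3) (Fin 3) (ZMod p))
        = ↑x⁻¹ * 1 := by rw [mul_one]
      _ = ↑x⁻¹ * (↑x * heisMat p (-a) (-b) (a * b - c)) := by rw [h1]
      _ = (↑x⁻¹ * ↑x) * heisMat p (-a) (-b) (a * b - c) := by rw [mul_assoc]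
      _ = heisMat p (-a) (-b) (a * b - c) := by rw [Units.inv_mul, one_mul]

open CategoryTheory
open scoped commutatorElement

theorem MonoidHom.commute_of_commutatorElement_mem_ker {G M : Type*} [Group G] [Monoid M]
    (f : G →* M) {g h : G} (hgh : ⁅g, h⁆ ∈ f.ker) : Commute (f g) (f h) := by
  have : ⁅f.toHomUnits g, f.toHomUnits h⁆ = 1 := by
    rw [← map_commutatorElement]; exact Units.ext hgh
  exact Units.ext_iff.mp (commutatorElement_eq_one_iff_commute.mp this)

namespace FDRep

variable {k G : Type*} [Field k]

section Monoid

variable [Monoid G]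

theorem finrank_pos (V : FDRep k G) [Simple V] : 0 < Module.finrank k V := by
  by_contra! h
  have : Subsingleton V := Module.finrank_zero_iff (R := k).mp (by omega)
  exact id_nonzero V (by ext x; exact Subsingleton.elim _ _)

theorem character_eq_of_ρ_eq_smul_id (V : FDRep k G) {g : G} {c : k}
    (h : V.ρ g = c • LinearMap.id) : V.character g = c * Module.finrank k V := by
  rw [character, h, map_smul, LinearMap.trace_id, smul_eq_mul]

theorem character_mul_of_ρ_eq_smul_id (V : FDRep k G) (g : G) {z : G} {c : k}
    (h : V.ρ z = c • LinearMap.id) : V.character (g * z) = c * V.character g := by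
  rw [character, map_mul, h, mul_smul_comm, map_smul, smul_eq_mul]
  rfl

theorem exists_ρ_eq_smul_id_of_commute [IsAlgClosed k] (V : FDRep k G) [Simple V] (z : G)
    (hz : ∀ g, Commute (V.ρ g) (V.ρ z)) : ∃ c : k, V.ρ z = c • LinearMap.id := by
  let f : V ⟶ V := ⟨InducedCategory.homMk (ModuleCat.ofHom (V.ρ z)), fun g => by
    ext1; exact (hz g).symm.eq⟩
  obtain ⟨c, hc⟩ := endomorphism_simple_eq_smul_id k f
  exact ⟨c, (congrArg (fun φ => φ.hom.hom.hom) hc).symm⟩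

end Monoid

section Group

variable [Group G]

theorem exists_ρ_eq_smul_id_of_mem_center [IsAlgClosed k] (V : FDRep k G) [Simple V] {z : G}
    (hz : z ∈ Subgroup.center G) : ∃ c : k, V.ρ z = c • LinearMap.id :=
  V.exists_ρ_eq_smul_id_of_commute z fun g => Commute.map (Subgroup.mem_center_iff.mp hz g) V.ρ

theorem ne_zero_of_ρ_eq_smul_id (V : FDRep k G) (hV : 0 < Module.finrank k V) {g : G} {c : k}
    (h : V.ρ g = c • LinearMap.id) : c ≠ 0 := by
  have : Nontrivial V := Module.nontrivial_of_finrank_pos hV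
  rintro rfl
  have hinv : V.ρ g⁻¹ * V.ρ g = 1 := by rw [← map_mul, inv_mul_cancel, map_one]
  rw [h, zero_smul, mul_zero] at hinv
  exact zero_ne_one hinv

theorem ρ_inv_eq_inv_smul_id (V : FDRep k G) (hV : 0 < Module.finrank k V) {g : G} {c : k}
    (h : V.ρ g = c • LinearMap.id) : V.ρ g⁻¹ = c⁻¹ • LinearMap.id := by
  have hc := V.ne_zero_of_ρ_eq_smul_id hV h
  have hinv : V.ρ g⁻¹ * V.ρ g = 1 := by rw [← map_mul, inv_mul_cancel, map_one]
  calc V.ρ g⁻¹ = c⁻¹ • (V.ρ g⁻¹ * (c • LinearMap.id)) := by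
        rw [mul_smul_comm, smul_smul, inv_mul_cancel₀ hc, one_smul]; rfl
    _ = c⁻¹ • LinearMap.id := by rw [← h, hinv]; rfl

theorem character_eq_zero_of_conj_eq_mul (V : FDRep k G) {g h z : G} {ω : k}
    (hz : V.ρ z = ω • LinearMap.id) (hω : ω ≠ 1) (hconj : h * g * h⁻¹ = g * z) :
    V.character g = 0 := by
  have : (ω - 1) * V.character g = 0 := by
    rw [sub_one_mul, ← character_mul_of_ρ_eq_smul_id V g hz, ← hconj, char_conj, sub_self]
  exact (mul_eq_zero.mp this).resolve_left (sub_ne_zero.mpr hω)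

variable [Fintype G]

theorem sum_character_mul_character_inv_eq_card_mul_finrank (V W : FDRep k G) (Z : Subgroup G)
    (hW : 0 < Module.finrank k W)
    (hZ : ∀ z ∈ Z, ∃ c : k, V.ρ z = c • LinearMap.id ∧ W.ρ z = c • LinearMap.id)
    (hV : ∀ g ∉ Z, V.character g = 0) :
    ∑ g, V.character g * W.character g⁻¹ =
      Nat.card Z * Module.finrank k V * Module.finrank k W := by
  classical
  have hterm : ∀ g, V.character g * W.character g⁻¹ =
      if g ∈ Z then (Module.finrank k V * Module.finrank k W : k) else 0 := by
    intro g
    split_ifs with hg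
    · obtain ⟨c, hVc, hWc⟩ := hZ g hg
      have hc := W.ne_zero_of_ρ_eq_smul_id hW hWc
      rw [character_eq_of_ρ_eq_smul_id V hVc,
        character_eq_of_ρ_eq_smul_id W (ρ_inv_eq_inv_smul_id W hW hWc)]
      field_simp
    · rw [hV g hg, zero_mul]
  rw [Finset.sum_congr rfl fun g _ => hterm g, Finset.sum_ite, Finset.sum_const_zero, add_zero,
    Finset.sum_const, nsmul_eq_mul, mul_assoc, Nat.card_eq_fintype_card, Fintype.card_subtype]

variable [IsAlgClosed k]

theorem sum_character_mul_character_inv_eq_zero [Invertible (Nat.card G : k)] (V W : FDRep k G)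
    [Simple V] [Simple W] (h : ¬Nonempty (V ≅ W)) :
    ∑ g, V.character g * W.character g⁻¹ = 0 := by
  have := char_orthonormal V W
  rw [if_neg h] at this
  exact (mul_eq_zero.mp this).resolve_left (inv_ne_zero (Invertible.ne_zero _))

theorem sum_character_mul_character_inv_self [Invertible (Nat.card G : k)] (V : FDRep k G)
    [Simple V] : ∑ g, V.character g * V.character g⁻¹ = Nat.card G := by
  have := char_orthonormal V V
  rw [if_pos ⟨Iso.refl V⟩, inv_mul_eq_one₀ (Invertible.ne_zero _)] at this
  exact this.symm

/-- By Schur every `V.ρ g` is a scalar, so orthogonality reads `|G| = |G| (dim V)²`. -/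
theorem finrank_eq_one_of_forall_commute [CharZero k] (V : FDRep k G) [Simple V]
    (hV : ∀ g h, Commute (V.ρ g) (V.ρ h)) : Module.finrank k V = 1 := by
  have hcard : (Nat.card G : k) ≠ 0 := Nat.cast_ne_zero.mpr Nat.card_pos.ne'
  have := invertibleOfNonzero hcard
  have hsum := sum_character_mul_character_inv_self V
  rw [sum_character_mul_character_inv_eq_card_mul_finrank V V ⊤ V.finrank_pos
    (fun z _ => (V.exists_ρ_eq_smul_id_of_commute z fun g => hV g z).imp fun _ h => ⟨h, h⟩)
    (fun g hg => absurd (Subgroup.mem_top g) hg), Subgroup.card_top, mul_assoc] at hsum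
  have : (Module.finrank k V * Module.finrank k V : k) = 1 :=
    mul_left_cancel₀ hcard (by simpa using hsum)
  exact_mod_cast Nat.eq_one_of_mul_eq_one_left (by exact_mod_cast this : _)

end Group

end FDRep

theorem heisMat_mul (p : ℕ) (a b c a' b' c' : ZMod p) :
    heisMat p a b c * heisMat p a' b' c' = heisMat p (a + a') (b + b') (c + c' + a * b') := by
  ext i j
  fin_cases i <;> fin_cases j <;>
    simp [heisMat, Matrix.mul_apply, Fin.sum_univ_three] <;> ring

theorem heisMat_zero (p : ℕ) : heisMat p 0 0 0 = 1 := by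
  simp [heisMat, Matrix.one_fin_three]

namespace Heis

variable {p : ℕ}

def mk (p : ℕ) (a b c : ZMod p) : Heis p :=
  ⟨⟨heisMat p a b c, heisMat p (-a) (-b) (a * b - c),
    by rw [heisMat_mul, ← heisMat_zero]; congr 1 <;> ring,
    by rw [heisMat_mul, ← heisMat_zero]; congr 1 <;> ring⟩, a, b, c, rfl⟩

theorem mk_mul (a b c a' b' c' : ZMod p) :
    mk p a b c * mk p a' b' c' = mk p (a + a') (b + b') (c + c' + a * b') :=
  Subtype.ext (Units.ext (heisMat_mul p a b c a' b' c'))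

theorem exists_eq_mk (g : Heis p) : ∃ a b c, g = mk p a b c := by
  obtain ⟨a, b, c, h⟩ := g.2
  exact ⟨a, b, c, Subtype.ext (Units.ext h)⟩

theorem mk_zero : mk p 0 0 0 = 1 :=
  Subtype.ext (Units.ext (heisMat_zero p))

theorem mk_inv (a b c : ZMod p) : (mk p a b c)⁻¹ = mk p (-a) (-b) (a * b - c) := by
  rw [inv_eq_iff_mul_eq_one, mk_mul, ← mk_zero]
  congr 1 <;> ring

theorem mk_mem_center (t : ZMod p) : mk p 0 0 t ∈ Subgroup.center (Heis p) := by
  refine Subgroup.mem_center_iff.mpr fun g => ?_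
  obtain ⟨a, b, c, rfl⟩ := exists_eq_mk g
  simp only [mk_mul]
  congr 1 <;> ring

theorem mk_zero_zero_one_pow (n : ℕ) : mk p 0 0 1 ^ n = mk p 0 0 n := by
  induction n with
  | zero => rw [pow_zero, Nat.cast_zero, mk_zero]
  | succ n ih =>
    rw [pow_succ, ih, mk_mul]
    congr 1 <;> push_cast <;> ring

theorem mk_mem_zpowers [NeZero p] (t : ZMod p) : mk p 0 0 t ∈ Subgroup.zpowers (mk p 0 0 1) := by
  simpa only [mk_zero_zero_one_pow, ZMod.natCast_zmod_val] using
    Subgroup.npow_mem_zpowers (mk p 0 0 1) t.val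

theorem commutatorElement_mem_zpowers [NeZero p] (g h : Heis p) :
    ⁅g, h⁆ ∈ Subgroup.zpowers (mk p 0 0 1) := by
  obtain ⟨a, b, c, rfl⟩ := exists_eq_mk g
  obtain ⟨a', b', c', rfl⟩ := exists_eq_mk h
  rw [commutatorElement_def, mk_inv, mk_inv, mk_mul, mk_mul, mk_mul]
  convert mk_mem_zpowers (a * b' - a' * b) using 2 <;> ring

theorem exists_conj_eq_mul_of_notMem_center [Fact p.Prime] {g : Heis p}
    (hg : g ∉ Subgroup.center (Heis p)) : ∃ h, h * g * h⁻¹ = g * mk p 0 0 1 := by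
  obtain ⟨a, b, c, rfl⟩ := exists_eq_mk g
  suffices ∃ h, h * mk p a b c = mk p a b c * mk p 0 0 1 * h from
    this.imp fun h hh => by rw [hh, mul_inv_cancel_right]
  -- conjugating by `mk x y 0` adds `x * b - a * y` to the corner entry
  by_cases hb : b = 0
  · have ha : a ≠ 0 := by
      rintro rfl
      exact hg (hb ▸ mk_mem_center c)
    refine ⟨mk p 0 (-a⁻¹) 0, ?_⟩
    simp only [mk_mul]
    congr 1 <;> [ring; ring; (field_simp; ring)]
  · refine ⟨mk p b⁻¹ 0 0, ?_⟩
    simp only [mk_mul]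
    congr 1 <;> [ring; ring; (field_simp; ring)]

end Heis

theorem heis_irrep_determined_by_central_character_general (p : ℕ) [Fact p.Prime]
    (ρ₁ ρ₂ : FDRep ℂ ↥(Heis p)) (h₁ : Simple ρ₁) (h₂ : Simple ρ₂)
    (hd₁ : 1 < Module.finrank ℂ ρ₁)
    (hcc : ∀ z ∈ Subgroup.center ↥(Heis p), ∀ c : ℂ,
      ρ₁.ρ z = c • LinearMap.id → ρ₂.ρ z = c • LinearMap.id) :
    Nonempty (ρ₁ ≅ ρ₂) := by
  let _ : Fintype (Heis p) := Fintype.ofFinite _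
  have hcard : (Nat.card (Heis p) : ℂ) ≠ 0 := Nat.cast_ne_zero.mpr Nat.card_pos.ne'
  have := invertibleOfNonzero hcard
  obtain ⟨ω, hω⟩ := ρ₁.exists_ρ_eq_smul_id_of_mem_center (Heis.mk_mem_center (p := p) 1)
  have hω1 : ω ≠ 1 := by
    rintro rfl
    have hker : Subgroup.zpowers (Heis.mk p 0 0 1) ≤ ρ₁.ρ.ker :=
      Subgroup.zpowers_le.mpr (by rw [MonoidHom.mem_ker, hω, one_smul]; rfl)
    exact hd₁.ne' (ρ₁.finrank_eq_one_of_forall_commute fun g h =>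
      ρ₁.ρ.commute_of_commutatorElement_mem_ker (hker (Heis.commutatorElement_mem_zpowers g h)))
  by_contra hiso
  have hsum := ρ₁.sum_character_mul_character_inv_eq_zero ρ₂ hiso
  rw [ρ₁.sum_character_mul_character_inv_eq_card_mul_finrank ρ₂ (Subgroup.center _) ρ₂.finrank_pos
    (fun z hz => (ρ₁.exists_ρ_eq_smul_id_of_mem_center hz).imp fun c hc => ⟨hc, hcc z hz c hc⟩)
    (fun g hg => by
      obtain ⟨h, hh⟩ := Heis.exists_conj_eq_mul_of_notMem_center hg
      exact ρ₁.character_eq_zero_of_conj_eq_mul hω hω1 hh)] at hsum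
  have hcenter := Nat.card_pos (α := Subgroup.center (Heis p))
  have hd₂ := ρ₂.finrank_pos
  simp only [mul_eq_zero, Nat.cast_eq_zero] at hsum
  omega

/-- Two complex irreducible representations of the Heisenberg group `H_p` of dimension `> 1`
with the same central character are isomorphic. -/
theorem heis_irrep_determined_by_central_character (p : ℕ) [Fact p.Prime]
    (ρ₁ ρ₂ : FDRep ℂ ↥(Heis p)) (h₁ : Simple ρ₁) (h₂ : Simple ρ₂)
    (hd₁ : 1 < Module.finrank ℂ ρ₁) (hd₂ : 1 < Module.finrank ℂ ρ₂)
    (hcc : ∀ z ∈ Subgroup.center ↥(Heis p), ∀ c : ℂ,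
      ρ₁.ρ z = c • LinearMap.id → ρ₂.ρ z = c • LinearMap.id) :
    Nonempty (ρ₁ ≅ ρ₂) :=
  heis_irrep_determined_by_central_character_general p ρ₁ ρ₂ h₁ h₂ hd₁ hcc
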